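/- For every α ∈ (1,2) and every integer n ≥ 1, the matrix τ(G_n^{(α)}) is symmetric negative definite, i.e., x^T τ(G_n^{(α)}) x < 0 for every nonzero x ∈ ℝ^n. -/
import Mathlib


/-- Grünwald–Letnikov coefficients: `g α 0 = 1`,
`g α l = (1 - (α+1)/l) * g α (l-1)` for `l ≥ 1`. -/
noncomputable def g (α : ℝ) : ℕ → ℝ
  | 0 => 1
  | l + 1 => (1 - (α + 1) / ((l : ℝ) + 1)) * g α l


/-- First column (Toeplitz symbol) of `G_n^{(α)}`: entry at distance `d` is
`2 g₁` if `d = 0`, `g₀ + g₂` if `d = 1`, and `g_{d+1}` if `d ≥ 2`. -/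
noncomputable def gSymb (α : ℝ) : ℕ → ℝ
  | 0 => 2 * g α 1
  | 1 => g α 0 + g α 2
  | d + 2 => g α (d + 3)

/-- The symmetric Toeplitz matrix `G_n^{(α)}`. -/
noncomputable def Gmat (α : ℝ) (n : ℕ) : Matrix (Fin n) (Fin n) ℝ :=
  Matrix.of fun i j => gSymb α (((i : ℤ) - (j : ℤ)).natAbs)

/-- The symmetric Toeplitz matrix `T_n = [t_{|i-j|}]` generated by `t`. -/
noncomputable def toeplitzMat (t : ℕ → ℝ) (n : ℕ) : Matrix (Fin n) (Fin n) ℝ :=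
  Matrix.of fun i j => t (((i : ℤ) - (j : ℤ)).natAbs)

/-- The Hankel correction matrix `H_n` (1-based indices `i, j`):
`[H_n]_{ij} = t_{i+j}` for `2 ≤ i+j ≤ n-1`, `0` for `n ≤ i+j ≤ n+2`,
and `t_{2n+2-(i+j)}` for `n+3 ≤ i+j ≤ 2n`. -/
noncomputable def hankelMat (t : ℕ → ℝ) (n : ℕ) : Matrix (Fin n) (Fin n) ℝ :=
  Matrix.of fun i j =>
    let s := (i : ℕ) + (j : ℕ) + 2
    if s ≤ n - 1 then t s else if s ≤ n + 2 then 0 else t (2 * n + 2 - s)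

/-- The τ matrix `τ(T_n) = T_n - H_n`. -/
noncomputable def tauMat (t : ℕ → ℝ) (n : ℕ) : Matrix (Fin n) (Fin n) ℝ :=
  toeplitzMat t n - hankelMat t n


noncomputable def hprod (α : ℝ) : ℕ → ℝ
  | 0 => 1
  | m + 1 => (1 - α / ((m : ℝ) + 1)) * hprod α m

lemma g_eq_hprod (α : ℝ) : ∀ m : ℕ, g α (m + 1) = -(α / ((m : ℝ) + 1)) * hprod α m := by
  intro m
  induction m with
  | zero => simp [g, hprod]
  | succ k ih =>
      have h1 : ((k:ℝ)+1) ≠ 0 := by positivity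
      have h2 : ((k:ℝ)+1+1) ≠ 0 := by positivity
      show g α (k+1+1) = _
      rw [g, ih, hprod]
      push_cast
      field_simp
      ring

lemma hprod_neg (α : ℝ) (hα₁ : 1 < α) (hα₂ : α < 2) : ∀ m : ℕ, hprod α (m+1) < 0 := by
  intro m
  induction m with
  | zero => show (1 - α/((0:ℕ)+1:ℝ)) * hprod α 0 < 0; simp [hprod]; linarith
  | succ k ih =>
      rw [hprod]; push_cast
      have hk : (0:ℝ) < (k:ℝ) + 1 + 1 := by positivity
      have : α / ((k:ℝ)+1+1) < 1 := by
        rw [div_lt_one hk]; have : (2:ℝ) ≤ (k:ℝ)+1+1 := by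
          have := Nat.cast_nonneg (α := ℝ) k; linarith
        linarith
      exact mul_neg_of_pos_of_neg (by linarith) ih

lemma g_pos (α : ℝ) (hα₁ : 1 < α) (hα₂ : α < 2) (m : ℕ) : 0 < g α (m+2) := by
  have := g_eq_hprod α (m+1)
  have hneg := hprod_neg α hα₁ hα₂ m
  have hpos : (0:ℝ) < α / ((m:ℝ)+1+1) := by positivity
  calc (0:ℝ) < -(α / ((m:ℝ)+1+1)) * hprod α (m+1) := by
        exact mul_pos_of_neg_of_neg (by linarith) hneg
    _ = g α (m+2) := by rw [show m+2 = (m+1)+1 from rfl, this]; push_cast; ring_nf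

lemma hprod_succ (α : ℝ) (m : ℕ) : hprod α (m+1) = hprod α m + g α (m+1) := by
  rw [g_eq_hprod, hprod]; ring

lemma g_anti (α : ℝ) (hα₁ : 1 < α) (hα₂ : α < 2) :
    ∀ a b : ℕ, 2 ≤ a → a ≤ b → g α b ≤ g α a := by
  intro a b ha hab
  induction b, hab using Nat.le_induction with
  | base => exact le_rfl
  | succ k hk ih =>
      have hk2 : 2 ≤ k := le_trans ha hk
      obtain ⟨m, rfl⟩ := Nat.exists_eq_add_of_le hk2
      have hpos := g_pos α hα₁ hα₂ m
      have hfac : (1 - (α + 1) / (((2+m:ℕ):ℝ)+1)) ≤ 1 := by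
        have : (0:ℝ) < ((2+m:ℕ):ℝ)+1 := by positivity
        have : (0:ℝ) ≤ (α+1) / (((2+m:ℕ):ℝ)+1) := by positivity
        linarith
      calc g α (2+m+1) = (1 - (α + 1) / (((2+m:ℕ):ℝ) + 1)) * g α (2+m) := by rw [g]
        _ ≤ 1 * g α (2+m) := by
            apply mul_le_mul_of_nonneg_right hfac (le_of_lt _)
            rw [Nat.add_comm 2 m]; exact hpos
        _ = g α (2+m) := by ring
        _ ≤ g α a := by rw [Nat.add_comm 2 m] at ih ⊢; exact ih

lemma g_one (α : ℝ) : g α 1 = -α := by simp [g]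

lemma gSymb_nonneg (α : ℝ) (hα₁ : 1 < α) (hα₂ : α < 2) (d : ℕ) (hd : 1 ≤ d) :
    0 ≤ gSymb α d := by
  match d, hd with
  | 1, _ =>
      show 0 ≤ g α 0 + g α 2
      have := g_pos α hα₁ hα₂ 0
      simp only [g]; simp only [g] at this; linarith
  | (e+2), _ =>
      show 0 ≤ g α (e+3)
      have := g_pos α hα₁ hα₂ (e+1)
      linarith [this]

lemma gSymb_anti (α : ℝ) (hα₁ : 1 < α) (hα₂ : α < 2) (a b : ℕ) (ha : 1 ≤ a) (hab : a ≤ b) :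
    gSymb α b ≤ gSymb α a := by
  match a, ha with
  | 1, _ =>
      match b, hab with
      | 1, _ => exact le_rfl
      | (e+2), _ =>
          show g α (e+3) ≤ g α 0 + g α 2
          have h1 : g α (e+3) ≤ g α 2 := g_anti α hα₁ hα₂ 2 (e+3) le_rfl (by omega)
          have h0 : g α 0 = 1 := rfl
          linarith
  | (c+2), _ =>
      match b, hab with
      | (e+2), hb =>
          show g α (e+3) ≤ g α (c+3)
          exact g_anti α hα₁ hα₂ (c+3) (e+3) (by omega) (by omega)

lemma rowsum_neg (α : ℝ) (hα₁ : 1 < α) (hα₂ : α < 2) (m : ℕ) :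
    gSymb α 0 + 2 * ∑ d ∈ Finset.range m, gSymb α (d+1) < 0 := by
  have hg0 : gSymb α 0 = 2 * g α 1 := rfl
  match m with
  | 0 => simp [hg0, g_one]; linarith
  | (k+1) =>
      have key : ∀ j : ℕ, gSymb α 0 + 2 * ∑ d ∈ Finset.range (j+1), gSymb α (d+1)
          = 2 * hprod α (j+2) := by
        intro j
        induction j with
        | zero =>
            simp [Finset.sum_range_one, hg0]
            show 2 * g α 1 + 2 * (g α 0 + g α 2) = 2 * hprod α 2
            have h2 : hprod α 2 = (1 - α/(1+1)) * ((1 - α/(0+1)) * 1) := by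
              show hprod α (1+1) = _
              rw [hprod, hprod, hprod]
              norm_num
            simp only [g, h2]
            norm_num
            ring
        | succ k ih =>
            rw [Finset.sum_range_succ, show k+1+2 = (k+2)+1 from rfl, hprod_succ]
            have : gSymb α (k+1+1) = g α (k+2+1) := rfl
            rw [mul_add, ← add_assoc, ih, this]
            ring
      rw [key k]
      linarith [hprod_neg α hα₁ hα₂ (k+1)]


open Matrix in
lemma negdef_of_rowsum {n : ℕ} (A : Matrix (Fin n) (Fin n) ℝ)
    (hs : ∀ i j, A i j = A j i)
    (hoff : ∀ i j, i ≠ j → 0 ≤ A i j) (hrow : ∀ i, ∑ j, A i j < 0)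
    (x : Fin n → ℝ) (hx : x ≠ 0) : x ⬝ᵥ (A *ᵥ x) < 0 := by
  have hq : x ⬝ᵥ (A *ᵥ x) = ∑ i, ∑ j, A i j * x i * x j := by
    simp only [dotProduct, mulVec, Finset.mul_sum]
    congr 1; ext i; congr 1; ext j; ring
  have step1 : ∑ i, ∑ j, A i j * x i * x j
      ≤ ∑ i, ∑ j, A i j * (x i ^ 2 + x j ^ 2) / 2 := by
    apply Finset.sum_le_sum; intro i _
    apply Finset.sum_le_sum; intro j _
    by_cases h : i = j
    · subst h; ring_nf; exact le_rfl
    · have h1 : 0 ≤ A i j := hoff i j h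
      nlinarith [sq_nonneg (x i - x j)]
  have step2 : ∑ i, ∑ j, A i j * (x i ^ 2 + x j ^ 2) / 2
      = ∑ i, (∑ j, A i j) * x i ^ 2 := by
    have e1 : ∀ i j : Fin n, A i j * (x i ^ 2 + x j ^ 2) / 2
        = A i j * x i ^ 2 / 2 + A i j * x j ^ 2 / 2 := by intro i j; ring
    simp only [e1, Finset.sum_add_distrib]
    rw [Finset.sum_comm (f := fun i j => A i j * x j ^ 2 / 2)]
    have e2 : ∀ j : Fin n, ∑ i, A i j * x j ^ 2 / 2 = (∑ i, A j i) * x j ^ 2 / 2 := by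
      intro j
      rw [← Finset.sum_div, ← Finset.sum_mul]
      congr 2
      exact Finset.sum_congr rfl fun i _ => hs i j
    simp only [e2]
    rw [← Finset.sum_add_distrib]
    congr 1; ext i
    rw [← Finset.sum_div, ← Finset.sum_mul]
    ring
  have hex : ∃ i, x i ≠ 0 := by
    by_contra h
    push_neg at h
    exact hx (funext h)
  obtain ⟨i0, hi0⟩ := hex
  have step3 : ∑ i, (∑ j, A i j) * x i ^ 2 < 0 := by
    have := Finset.sum_lt_sum (s := Finset.univ)
      (f := fun i => (∑ j, A i j) * x i ^ 2) (g := fun _ => (0:ℝ))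
      (fun i _ => mul_nonpos_of_nonpos_of_nonneg (le_of_lt (hrow i)) (sq_nonneg _))
      ⟨i0, Finset.mem_univ i0, mul_neg_of_neg_of_pos (hrow i0) (by positivity)⟩
    simpa using this
  calc x ⬝ᵥ (A *ᵥ x) = ∑ i, ∑ j, A i j * x i * x j := hq
    _ ≤ ∑ i, ∑ j, A i j * (x i ^ 2 + x j ^ 2) / 2 := step1
    _ = ∑ i, (∑ j, A i j) * x i ^ 2 := step2
    _ < 0 := step3


lemma toeplitz_rowsum (t : ℕ → ℝ) (ht : ∀ d, 1 ≤ d → 0 ≤ t d) (n i : ℕ) (hi : i < n) :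
    ∑ k ∈ Finset.range n, t ((i:ℤ) - (k:ℤ)).natAbs
      ≤ t 0 + 2 * ∑ d ∈ Finset.range (n-1), t (d+1) := by
  set f : ℕ → ℝ := fun k => t ((i:ℤ) - (k:ℤ)).natAbs with hf
  have hsplit : ∑ k ∈ Finset.range n, f k
      = ∑ k ∈ Finset.range i, f k + ∑ k ∈ Finset.Ico i n, f k := by
    rw [Finset.sum_range_add_sum_Ico _ (le_of_lt hi)]
  have hL : ∑ k ∈ Finset.range i, f k = ∑ d ∈ Finset.range i, t (d+1) := by
    rw [← Finset.sum_range_reflect f i]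
    apply Finset.sum_congr rfl
    intro k hk
    simp only [Finset.mem_range] at hk
    simp only [hf]
    congr 1
    omega
  have hR : ∑ k ∈ Finset.Ico i n, f k = t 0 + ∑ d ∈ Finset.range (n-i-1), t (d+1) := by
    rw [Finset.sum_Ico_eq_sum_range]
    have hni : n - i = (n - i - 1) + 1 := by omega
    rw [hni, Finset.sum_range_succ']
    have e : ∀ k, f (i + k) = t k := by
      intro k; simp only [hf]; congr 1; omega
    simp only [e]
    rw [show n - i - 1 + 1 - 1 = n - i - 1 from by omega]
    ring
  have hsubL : ∑ d ∈ Finset.range i, t (d+1) ≤ ∑ d ∈ Finset.range (n-1), t (d+1) := by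
    apply Finset.sum_le_sum_of_subset_of_nonneg
    · exact Finset.range_subset_range.mpr (by omega)
    · intro d _ _; exact ht (d+1) (by omega)
  have hsubR : ∑ d ∈ Finset.range (n-i-1), t (d+1) ≤ ∑ d ∈ Finset.range (n-1), t (d+1) := by
    apply Finset.sum_le_sum_of_subset_of_nonneg
    · exact Finset.range_subset_range.mpr (by omega)
    · intro d _ _; exact ht (d+1) (by omega)
  calc ∑ k ∈ Finset.range n, f k
      = ∑ d ∈ Finset.range i, t (d+1) + (t 0 + ∑ d ∈ Finset.range (n-i-1), t (d+1)) := by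
        rw [hsplit, hL, hR]
    _ ≤ t 0 + 2 * ∑ d ∈ Finset.range (n-1), t (d+1) := by linarith

open Matrix in
theorem stmt13 (α : ℝ) (hα₁ : 1 < α) (hα₂ : α < 2) (n : ℕ) (hn : 1 ≤ n) :
    (tauMat (gSymb α) n).IsSymm ∧
      ∀ x : Fin n → ℝ, x ≠ 0 → x ⬝ᵥ (tauMat (gSymb α) n *ᵥ x) < 0 := by
  have hsym : ∀ i j : Fin n, tauMat (gSymb α) n i j = tauMat (gSymb α) n j i := by
    intro i j
    simp only [tauMat, toeplitzMat, hankelMat, Matrix.sub_apply, Matrix.of_apply]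
    have h1 : ((i:ℤ) - (j:ℤ)).natAbs = ((j:ℤ) - (i:ℤ)).natAbs := by omega
    have h2 : (j:ℕ) + (i:ℕ) = (i:ℕ) + (j:ℕ) := Nat.add_comm _ _
    rw [h1, h2]
  have hvalne : ∀ i j : Fin n, i ≠ j → (i:ℕ) ≠ (j:ℕ) := by
    intro i j hij h; exact hij (Fin.ext h)
  have hbound : ∀ i : Fin n, (i:ℕ) < n := fun i => i.isLt
  have hoff : ∀ i j : Fin n, i ≠ j → 0 ≤ tauMat (gSymb α) n i j := by
    intro i j hij
    have hne := hvalne i j hij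
    have hi := hbound i
    have hj := hbound j
    simp only [tauMat, toeplitzMat, hankelMat, Matrix.sub_apply, Matrix.of_apply]
    set d := ((i:ℤ) - (j:ℤ)).natAbs with hd
    have hd1 : 1 ≤ d := by omega
    split_ifs with h1 h2
    · have : gSymb α ((i:ℕ) + (j:ℕ) + 2) ≤ gSymb α d :=
        gSymb_anti α hα₁ hα₂ d _ hd1 (by omega)
      linarith
    · have := gSymb_nonneg α hα₁ hα₂ d hd1
      linarith
    · have : gSymb α (2*n + 2 - ((i:ℕ) + (j:ℕ) + 2)) ≤ gSymb α d :=
        gSymb_anti α hα₁ hα₂ d _ hd1 (by omega)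
      linarith
  have hrow : ∀ i : Fin n, ∑ j, tauMat (gSymb α) n i j < 0 := by
    intro i
    have hi := hbound i
    have hsum : ∑ j, tauMat (gSymb α) n i j
        = ∑ j, toeplitzMat (gSymb α) n i j - ∑ j, hankelMat (gSymb α) n i j := by
      simp [tauMat, Matrix.sub_apply, Finset.sum_sub_distrib]
    have hhank : 0 ≤ ∑ j, hankelMat (gSymb α) n i j := by
      apply Finset.sum_nonneg
      intro j _
      have hj := hbound j
      simp only [hankelMat, Matrix.of_apply]
      split_ifs with h1 h2
      · exact gSymb_nonneg α hα₁ hα₂ _ (by omega)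
      · exact le_rfl
      · exact gSymb_nonneg α hα₁ hα₂ _ (by omega)
    have htoe : ∑ j, toeplitzMat (gSymb α) n i j
        ≤ gSymb α 0 + 2 * ∑ d ∈ Finset.range (n-1), gSymb α (d+1) := by
      have heq : ∑ j, toeplitzMat (gSymb α) n i j
          = ∑ k ∈ Finset.range n, gSymb α (((i:ℕ):ℤ) - (k:ℤ)).natAbs := by
        rw [← Fin.sum_univ_eq_sum_range (fun k => gSymb α (((i:ℕ):ℤ) - (k:ℤ)).natAbs) n]
        apply Finset.sum_congr rfl
        intro j _
        simp [toeplitzMat]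
      rw [heq]
      exact toeplitz_rowsum (gSymb α) (fun d hd => gSymb_nonneg α hα₁ hα₂ d hd) n i hi
    have := rowsum_neg α hα₁ hα₂ (n-1)
    linarith
  constructor
  · ext i j
    simp only [Matrix.transpose_apply]
    exact hsym j i
  · intro x hx
    exact negdef_of_rowsum (tauMat (gSymb α) n) hsym hoff hrow x hx
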